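/- arXiv:2212.08152 — 2 statements merged into one kernel-verified Lean document; each statement's English description precedes it below -/
import Mathlib

section
/- (Large girth estimate, first case) Let G be a finite simple cubic graph (every vertex has degree exactly 3) with first Betti number b ≥ 3, and suppose S > 0 is a real number such that every finite simple graph with first Betti number at least b−2, equipped with any probability edge weighting, contains a cycle of weight at most S. Then for every probability edge weighting λ of G there exists a cycle C in G with λ(C) ≤ ((b−2)/(b−1))·S. -/
/-!
A cubic graph has `2|E| = 3|V|`, so `b = |V|/2 + c` and `|V| ≤ 2b - 2`. The stars of the vertices
cover every edge twice, hence some vertex `x` has star weight `T ≥ 2/|V| ≥ 1/(b-1)`. Deleting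
the three edges at `x` isolates `x`, so the Betti number drops by at most `2`. Rescaling `λ` on the
remaining graph to a probability weighting and applying the hypothesis there gives a cycle of
`λ`-weight at most `(1 - T) S ≤ ((b-2)/(b-1)) S`.
-/

open Finset

theorem Finset.exists_probability_weighting_of_nonneg {α : Type*} {s : Finset α} {f : α → ℝ}
    (hs : s.Nonempty) (hf : ∀ a ∈ s, 0 ≤ f a) :
    ∃ μ : α → ℝ, (∀ a ∈ s, 0 ≤ μ a) ∧ ∑ a ∈ s, μ a = 1 ∧
      ∀ a ∈ s, f a = (∑ a ∈ s, f a) * μ a := by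
  by_cases h0 : ∑ a ∈ s, f a = 0
  · -- `f = 0` on `s`, so any weighting works, e.g. the uniform one.
    refine ⟨fun _ => (#s : ℝ)⁻¹, fun _ _ => by positivity, ?_, fun a ha => ?_⟩
    · rw [sum_const, nsmul_eq_mul, mul_inv_cancel₀ (by simpa using hs.ne_empty)]
    · rw [h0, zero_mul]
      exact (sum_eq_zero_iff_of_nonneg hf).1 h0 a ha
  · refine ⟨fun a => f a / ∑ a ∈ s, f a, fun a ha => div_nonneg (hf a ha) (sum_nonneg hf),
      by rw [← sum_div, div_self h0], fun a _ => by field_simp⟩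

namespace SimpleGraph

variable {V : Type*} (G : SimpleGraph V)

theorem card_connectedComponent_le_card [Fintype V] :
    Nat.card G.ConnectedComponent ≤ Fintype.card V := by
  rw [← Nat.card_eq_fintype_card]
  exact Nat.card_le_card_of_surjective G.connectedComponentMk Quot.mk_surjective

theorem card_connectedComponent_lt_of_le_of_not_reachable [Finite V] {H : SimpleGraph V}
    (hHG : H ≤ G) {u v : V} (huv : G.Adj u v) (hnr : ¬H.Reachable u v) :
    Nat.card G.ConnectedComponent < Nat.card H.ConnectedComponent := by
  have := Fintype.ofFinite G.ConnectedComponent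
  have := Fintype.ofFinite H.ConnectedComponent
  simp only [Nat.card_eq_fintype_card]
  refine Fintype.card_lt_of_surjective_not_injective _
    (ConnectedComponent.surjective_map_ofLE hHG) fun hinj => hnr ?_
  refine ConnectedComponent.exact (hinj ?_)
  simpa using ConnectedComponent.sound huv.reachable

theorem exists_isCycle_sum_le_mul_of_le [DecidableEq V] {H : SimpleGraph V} [Fintype H.edgeSet]
    (hHG : H ≤ G) {lam : Sym2 V → ℝ} (hne : H.edgeFinset.Nonempty)
    (hnn : ∀ e ∈ H.edgeFinset, 0 ≤ lam e) {S : ℝ}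
    (hS : ∀ μ : Sym2 V → ℝ, (∀ e ∈ H.edgeFinset, 0 ≤ μ e) → ∑ e ∈ H.edgeFinset, μ e = 1 →
      ∃ (y : V) (w : H.Walk y y), w.IsCycle ∧ ∑ e ∈ w.edges.toFinset, μ e ≤ S) :
    ∃ (y : V) (w : G.Walk y y), w.IsCycle ∧
      ∑ e ∈ w.edges.toFinset, lam e ≤ (∑ e ∈ H.edgeFinset, lam e) * S := by
  obtain ⟨μ, hμnn, hμsum, hlam⟩ := exists_probability_weighting_of_nonneg hne hnn
  obtain ⟨y, w, hw, hwS⟩ := hS μ hμnn hμsum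
  have hwH : ∀ e ∈ w.edges.toFinset, e ∈ H.edgeFinset := fun e he =>
    mem_edgeFinset.2 (w.edges_subset_edgeSet (List.mem_toFinset.1 he))
  refine ⟨y, w.mapLe hHG, hw.mapLe hHG, ?_⟩
  calc ∑ e ∈ (w.mapLe hHG).edges.toFinset, lam e
      = (∑ e ∈ H.edgeFinset, lam e) * ∑ e ∈ w.edges.toFinset, μ e := by
        rw [Walk.edges_mapLe_eq_edges, mul_sum]
        exact sum_congr rfl fun e he => hlam e (hwH e he)
    _ ≤ (∑ e ∈ H.edgeFinset, lam e) * S := mul_le_mul_of_nonneg_left hwS (sum_nonneg hnn)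

theorem not_reachable_deleteIncidenceSet {x y : V} (hxy : x ≠ y) :
    ¬(G.deleteIncidenceSet x).Reachable x y := by
  rintro ⟨_ | ⟨hadj, _⟩⟩
  · exact hxy rfl
  · exact (deleteIncidenceSet_adj.1 hadj).2.1 rfl

section Fintype

variable [Fintype V] [DecidableRel G.Adj]

theorem IsRegularOfDegree.two_mul_card_edgeFinset {d : ℕ} (h : G.IsRegularOfDegree d) :
    2 * #G.edgeFinset = d * Fintype.card V := by
  rw [← sum_degrees_eq_twice_card_edges]
  simp [h.degree_eq, mul_comm]

theorem IsRegularOfDegree.card_add_two_mul_card_connectedComponent (h : G.IsRegularOfDegree 3)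
    {b : ℕ} (hb : #G.edgeFinset + Nat.card G.ConnectedComponent = Fintype.card V + b) :
    Fintype.card V + 2 * Nat.card G.ConnectedComponent = 2 * b := by
  have := h.two_mul_card_edgeFinset
  omega

variable [DecidableEq V]

theorem sum_sum_incidenceFinset {M : Type*} [AddCommMonoid M] (f : Sym2 V → M) :
    ∑ v, ∑ e ∈ G.incidenceFinset v, f e = 2 • ∑ e ∈ G.edgeFinset, f e := by
  simp_rw [incidenceFinset_eq_filter, sum_filter]
  rw [sum_comm, smul_sum]
  refine sum_congr rfl fun e he => ?_
  rw [← sum_filter, sum_const,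
    ← Sym2.card_toFinset_of_not_isDiag e (G.not_isDiag_of_mem_edgeSet (mem_edgeFinset.1 he))]
  congr 2
  ext
  simp

theorem exists_le_sum_incidenceFinset [Nonempty V] (f : Sym2 V → ℝ) :
    ∃ v, 2 * (∑ e ∈ G.edgeFinset, f e) / Fintype.card V ≤
      ∑ e ∈ G.incidenceFinset v, f e := by
  obtain ⟨v, -, hv⟩ := exists_le_of_sum_le (f := fun _ => 2 * (∑ e ∈ G.edgeFinset, f e) /
    Fintype.card V) (g := fun v => ∑ e ∈ G.incidenceFinset v, f e) univ_nonempty <| by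
    rw [sum_sum_incidenceFinset, sum_const, card_univ, nsmul_eq_mul, nsmul_eq_mul]
    rw [Nat.cast_two, mul_div_cancel₀ _ (by positivity)]
  exact ⟨v, hv⟩

theorem sum_edgeFinset_deleteIncidenceSet {M : Type*} [AddCommGroup M] (f : Sym2 V → M) (x : V) :
    ∑ e ∈ (G.deleteIncidenceSet x).edgeFinset, f e =
      ∑ e ∈ G.edgeFinset, f e - ∑ e ∈ G.incidenceFinset x, f e := by
  rw [edgeFinset_deleteIncidenceSet_eq_sdiff, sum_sdiff_eq_sub (G.incidenceFinset_subset x)]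

theorem card_edgeFinset_add_card_connectedComponent_le_deleteIncidenceSet {x : V}
    (hx : 0 < G.degree x) :
    #G.edgeFinset + Nat.card G.ConnectedComponent + 1 ≤
      #(G.deleteIncidenceSet x).edgeFinset + Nat.card (G.deleteIncidenceSet x).ConnectedComponent +
        G.degree x := by
  obtain ⟨y, hxy⟩ := G.degree_pos_iff_exists_adj x |>.1 hx
  have hc := G.card_connectedComponent_lt_of_le_of_not_reachable (G.deleteIncidenceSet_le x) hxy
    (G.not_reachable_deleteIncidenceSet hxy.ne)
  have hdeg : G.degree x ≤ #G.edgeFinset :=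
    G.card_incidenceFinset_eq_degree x ▸ card_le_card (G.incidenceFinset_subset x)
  rw [card_edgeFinset_deleteIncidenceSet]
  omega

end Fintype

end SimpleGraph

open SimpleGraph

attribute [local instance] Classical.propDecidable

/-- Large girth estimate, part (1) (Lemma 3.4 of the paper): if `G` is a cubic graph with
first Betti number `b ≥ 3` (encoded by `|E| + c = |V| + b`), and if every graph of first
Betti number at least `b − 2` with a probability edge weighting has a cycle of weight at
most `S > 0`, then every probability edge weighting of `G` admits a cycle of weight at
most `((b−2)/(b−1))·S`. -/
theorem large_girth_estimate_one {V : Type} [Fintype V] (G : SimpleGraph V)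
    (hcubic : ∀ v : V, G.degree v = 3)
    (b : ℕ) (hb : 3 ≤ b)
    (hbetti : G.edgeFinset.card + Nat.card G.ConnectedComponent = Fintype.card V + b)
    (S : ℝ) (hSpos : 0 < S)
    (hsys : ∀ (V' : Type) [Fintype V'] (G' : SimpleGraph V') (b' : ℕ),
      G'.edgeFinset.card + Nat.card G'.ConnectedComponent = Fintype.card V' + b' →
      b - 2 ≤ b' →
      ∀ lam' : Sym2 V' → ℝ, (∀ e ∈ G'.edgeFinset, 0 ≤ lam' e) →
        (∑ e ∈ G'.edgeFinset, lam' e = 1) →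
        ∃ (x : V') (w : G'.Walk x x), w.IsCycle ∧ ∑ e ∈ w.edges.toFinset, lam' e ≤ S)
    (lam : Sym2 V → ℝ) (hnn : ∀ e ∈ G.edgeFinset, 0 ≤ lam e)
    (hsum : ∑ e ∈ G.edgeFinset, lam e = 1) :
    ∃ (x : V) (w : G.Walk x x), w.IsCycle ∧
      ∑ e ∈ w.edges.toFinset, lam e ≤ (((b : ℝ) - 2) / ((b : ℝ) - 1)) * S := by
  have hVc := IsRegularOfDegree.card_add_two_mul_card_connectedComponent G hcubic hbetti
  have hcV := G.card_connectedComponent_le_card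
  have : Nonempty V := Fintype.card_pos_iff.1 (by omega)
  have hc : 0 < Nat.card G.ConnectedComponent := Nat.card_pos
  obtain ⟨x, hx⟩ := G.exists_le_sum_incidenceFinset lam
  have hHbetti := G.card_edgeFinset_add_card_connectedComponent_le_deleteIncidenceSet
    (x := x) (by rw [hcubic]; norm_num)
  rw [hcubic] at hHbetti
  have hcH := (G.deleteIncidenceSet x).card_connectedComponent_le_card
  obtain ⟨b', hb'⟩ := Nat.exists_eq_add_of_le
    (show Fintype.card V ≤ #(G.deleteIncidenceSet x).edgeFinset +
      Nat.card (G.deleteIncidenceSet x).ConnectedComponent by omega)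
  -- `hsys` carries its own decidability instances, hence the `convert`s.
  obtain ⟨y, w, hw, hwS⟩ := G.exists_isCycle_sum_le_mul_of_le (G.deleteIncidenceSet_le x)
    (lam := lam) (card_pos.1 (by omega))
    (fun e he => hnn e (edgeFinset_subset_edgeFinset.2 (G.deleteIncidenceSet_le x) he))
    fun μ hμnn hμsum => hsys V _ b' (by convert hb') (by omega) μ (by convert hμnn)
      (by convert hμsum)
  refine ⟨y, w, hw, hwS.trans (mul_le_mul_of_nonneg_right ?_ hSpos.le)⟩
  rw [G.sum_edgeFinset_deleteIncidenceSet, hsum]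
  rw [hsum, mul_one] at hx
  have hV : (Fintype.card V : ℝ) + 2 ≤ 2 * b := by
    exact_mod_cast (by omega : Fintype.card V + 2 ≤ 2 * b)
  have hVpos : (0 : ℝ) < Fintype.card V := by positivity
  have hb1 : (0 : ℝ) < b - 1 := by linarith
  rw [div_le_iff₀ hVpos] at hx
  rw [le_div_iff₀ hb1]
  nlinarith
end

section
/- (3-sum bound) Let V₁ and V₂ be finite-dimensional vector spaces over 𝔽₂ = ZMod 2, let e¹ : ι₁ → V₁ and e² : ι₂ → V₂ be finite families of vectors, and for k = 1, 2 let W_k ⊆ V_k be a 2-dimensional subspace such that every nonzero vector of W_k occurs among the values of e^k. Fix a linear isomorphism φ : W₁ → W₂ and let W = {(w, φ(w)) : w ∈ W₁} ⊆ V₁ × V₂ and V = (V₁ × V₂)/W. Let e be the family indexed by {i ∈ ι₁ : e¹_i ∉ W₁} ⊕ {j ∈ ι₂ : e²_j ∉ W₂} whose values are the images in V of (e¹_i, 0) and (0, e²_j) respectively. For k = 1, 2 let e^{k′} be the family of images of those e^k_i not lying in W_k in V_k/W_k, and assume V_k/W_k ≠ 0 and that e^{k′} spans V_k/W_k. Then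 c(e) · (c(e^{1′}) + c(e^{2′})) ≤ c(e^{1′}) · c(e^{2′}); equivalently, c(e)⁻¹ ≥ c(e^{1′})⁻¹ + c(e^{2′})⁻¹. -/
attribute [local instance] Classical.propDecidable

/-- `mWeight e lam` is the minimum, over nonzero `ZMod 2`-linear functionals `v`,
of the total `lam`-weight of the indices `i` with `v (e i) ≠ 0`. -/
noncomputable def mWeight {V : Type} [AddCommGroup V] [Module (ZMod 2) V]
    {ι : Type} [Fintype ι] (e : ι → V) (lam : ι → ℝ) : ℝ :=
  sInf {x : ℝ | ∃ v : V →ₗ[ZMod 2] ZMod 2, v ≠ 0 ∧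
    x = ∑ i ∈ Finset.univ.filter (fun i => v (e i) ≠ 0), lam i}

/-- The cogirth `c(e)` of a family `e` of vectors over `ZMod 2`: the supremum of
`mWeight e lam` over all probability weightings `lam`. -/
noncomputable def cogirth {V : Type} [AddCommGroup V] [Module (ZMod 2) V]
    {ι : Type} [Fintype ι] (e : ι → V) : ℝ :=
  sSup {x : ℝ | ∃ lam : ι → ℝ, (∀ i, 0 ≤ lam i) ∧ (∑ i, lam i = 1) ∧ x = mWeight e lam}

lemma exists_dual_ne_zero {Q : Type} [AddCommGroup Q] [Module (ZMod 2) Q] [Nontrivial Q] :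
    ∃ u : Q →ₗ[ZMod 2] ZMod 2, u ≠ 0 := by
  obtain ⟨x, hx⟩ := exists_ne (0 : Q)
  have := (Module.forall_dual_apply_eq_zero_iff (ZMod 2) x).not.mpr hx
  push_neg at this
  obtain ⟨u, hu⟩ := this
  exact ⟨u, fun h => hu (by simp [h])⟩

lemma mWeight_nonneg {V : Type} [AddCommGroup V] [Module (ZMod 2) V]
    {ι : Type} [Fintype ι] (e : ι → V) (lam : ι → ℝ) (hlam : ∀ i, 0 ≤ lam i) :
    0 ≤ mWeight e lam := by
  apply Real.sInf_nonneg
  rintro x ⟨v, -, rfl⟩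
  exact Finset.sum_nonneg fun i _ => hlam i

lemma cogirth_nonneg {V : Type} [AddCommGroup V] [Module (ZMod 2) V]
    {ι : Type} [Fintype ι] (e : ι → V) : 0 ≤ cogirth e := by
  apply Real.sSup_nonneg
  rintro x ⟨lam, hlam, -, rfl⟩
  exact mWeight_nonneg e lam hlam

lemma mWeight_le {V : Type} [AddCommGroup V] [Module (ZMod 2) V]
    {ι : Type} [Fintype ι] (e : ι → V) (lam : ι → ℝ) (hlam : ∀ i, 0 ≤ lam i)
    (v : V →ₗ[ZMod 2] ZMod 2) (hv : v ≠ 0) :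
    mWeight e lam ≤ ∑ i ∈ Finset.univ.filter (fun i => v (e i) ≠ 0), lam i := by
  apply csInf_le
  · exact ⟨0, by rintro x ⟨u, -, rfl⟩; exact Finset.sum_nonneg fun i _ => hlam i⟩
  · exact ⟨v, hv, rfl⟩

lemma cogirth_bddAbove {V : Type} [AddCommGroup V] [Module (ZMod 2) V] [Nontrivial V]
    {ι : Type} [Fintype ι] (e : ι → V) :
    BddAbove {x : ℝ | ∃ lam : ι → ℝ, (∀ i, 0 ≤ lam i) ∧ (∑ i, lam i = 1) ∧ x = mWeight e lam} := by
  refine ⟨1, ?_⟩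
  rintro x ⟨lam, hlam, hsum, rfl⟩
  obtain ⟨u, hu⟩ := exists_dual_ne_zero (Q := V)
  calc mWeight e lam ≤ ∑ i ∈ Finset.univ.filter (fun i => u (e i) ≠ 0), lam i :=
        mWeight_le e lam hlam u hu
    _ ≤ ∑ i, lam i := Finset.sum_le_sum_of_subset_of_nonneg (Finset.filter_subset _ _)
        (fun i _ _ => hlam i)
    _ = 1 := hsum

/-- Key auxiliary bound: if `T` is a surjective linear map carrying the family `e`
(restricted along an injection `emb`) onto the family `e'` and killing the rest of `e`,
then `mWeight e lam ≤ (∑ k, lam (emb k)) * cogirth e'`. -/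
lemma mWeight_le_mul_cogirth {Q Q' : Type} [AddCommGroup Q] [Module (ZMod 2) Q]
    [AddCommGroup Q'] [Module (ZMod 2) Q'] [Nontrivial Q']
    {ι κ : Type} [Fintype ι] [Fintype κ]
    (e : ι → Q) (e' : κ → Q') (T : Q →ₗ[ZMod 2] Q') (hT : Function.Surjective T)
    (emb : κ → ι) (hinj : Function.Injective emb)
    (hTe : ∀ k, T (e (emb k)) = e' k) (hTe0 : ∀ σ, σ ∉ Set.range emb → T (e σ) = 0)
    (lam : ι → ℝ) (hlam : ∀ σ, 0 ≤ lam σ) :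
    mWeight e lam ≤ (∑ k, lam (emb k)) * cogirth e' := by
  set s := ∑ k, lam (emb k) with hs
  have hs0 : 0 ≤ s := Finset.sum_nonneg fun k _ => hlam _
  have hfilter : ∀ u : Q' →ₗ[ZMod 2] ZMod 2,
      Finset.univ.filter (fun σ => (u.comp T) (e σ) ≠ 0)
        = (Finset.univ.filter (fun k => u (e' k) ≠ 0)).image emb := by
    intro u
    ext σ
    simp only [Finset.mem_filter, Finset.mem_image, Finset.mem_univ, true_and,
      LinearMap.comp_apply]
    constructor
    · intro h
      by_cases hr : σ ∈ Set.range emb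
      · obtain ⟨k, rfl⟩ := hr
        exact ⟨k, by rw [← hTe k]; exact h, rfl⟩
      · exact absurd (by rw [hTe0 σ hr]; simp) h
    · rintro ⟨k, hk, rfl⟩
      rw [hTe k]; exact hk
  have hcomp_ne : ∀ u : Q' →ₗ[ZMod 2] ZMod 2, u ≠ 0 → u.comp T ≠ 0 := by
    intro u hu
    obtain ⟨y, hy⟩ := DFunLike.ne_iff.mp hu
    obtain ⟨x, rfl⟩ := hT y
    intro h
    apply hy
    have := DFunLike.congr_fun h x
    simpa using this
  have hkey : ∀ u : Q' →ₗ[ZMod 2] ZMod 2, u ≠ 0 →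
      mWeight e lam ≤ ∑ k ∈ Finset.univ.filter (fun k => u (e' k) ≠ 0), lam (emb k) := by
    intro u hu
    have h1 := mWeight_le e lam hlam (u.comp T) (hcomp_ne u hu)
    rwa [hfilter u, Finset.sum_image (fun a _ b _ h => hinj h)] at h1
  obtain ⟨u₀, hu₀⟩ := exists_dual_ne_zero (Q := Q')
  rcases eq_or_lt_of_le hs0 with hseq | hspos
  · have hz : ∀ k, lam (emb k) = 0 := by
      intro k
      have := (Finset.sum_eq_zero_iff_of_nonneg (fun k _ => hlam (emb k))).mp hseq.symm
      exact this k (Finset.mem_univ k)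
    calc mWeight e lam ≤ ∑ k ∈ Finset.univ.filter (fun k => u₀ (e' k) ≠ 0), lam (emb k) :=
          hkey u₀ hu₀
      _ = 0 := Finset.sum_eq_zero fun k _ => hz k
      _ = s * cogirth e' := by rw [← hseq, zero_mul]
  · set lam' : κ → ℝ := fun k => lam (emb k) / s with hlam'def
    have hlam'0 : ∀ k, 0 ≤ lam' k := fun k => div_nonneg (hlam _) hs0
    have hsum' : ∑ k, lam' k = 1 := by
      simp only [hlam'def, ← Finset.sum_div]
      rw [← hs, div_self hspos.ne']
    have hm'le : mWeight e' lam' ≤ cogirth e' :=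
      le_csSup (cogirth_bddAbove e') ⟨lam', hlam'0, hsum', rfl⟩
    have hle : mWeight e lam / s ≤ mWeight e' lam' := by
      show mWeight e lam / s ≤ sInf {x : ℝ | ∃ v : Q' →ₗ[ZMod 2] ZMod 2, v ≠ 0 ∧
        x = ∑ k ∈ Finset.univ.filter (fun k => v (e' k) ≠ 0), lam' k}
      have hne : {x : ℝ | ∃ v : Q' →ₗ[ZMod 2] ZMod 2, v ≠ 0 ∧
          x = ∑ k ∈ Finset.univ.filter (fun k => v (e' k) ≠ 0), lam' k}.Nonempty :=
        ⟨∑ k ∈ Finset.univ.filter (fun k => u₀ (e' k) ≠ 0), lam' k, u₀, hu₀, rfl⟩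
      apply le_csInf hne
      rintro x ⟨u, hu, rfl⟩
      rw [div_le_iff₀ hspos]
      calc mWeight e lam
          ≤ ∑ k ∈ Finset.univ.filter (fun k => u (e' k) ≠ 0), lam (emb k) := hkey u hu
        _ = (∑ k ∈ Finset.univ.filter (fun k => u (e' k) ≠ 0), lam' k) * s := by
            rw [Finset.sum_mul]
            refine Finset.sum_congr rfl fun k _ => ?_
            simp only [hlam'def]
            rw [div_mul_cancel₀ _ hspos.ne']
    have h2 : mWeight e lam ≤ mWeight e' lam' * s := (div_le_iff₀ hspos).mp hle
    calc mWeight e lam ≤ mWeight e' lam' * s := h2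
      _ ≤ cogirth e' * s := mul_le_mul_of_nonneg_right hm'le hs0
      _ = s * cogirth e' := mul_comm _ _

/-- The `k = 3` case of Lemma 4.6 of the paper: the cogirth of the 3-sum along
2-dimensional subspaces `W₁ ≅ W₂` (all of whose nonzero vectors occur in the respective
families) satisfies `c(e)·(c(e¹′) + c(e²′)) ≤ c(e¹′)·c(e²′)`,
i.e. `c(e)⁻¹ ≥ c(e¹′)⁻¹ + c(e²′)⁻¹`. -/
theorem three_sum_cogirth_bound {V₁ V₂ : Type} [AddCommGroup V₁] [Module (ZMod 2) V₁]
    [AddCommGroup V₂] [Module (ZMod 2) V₂]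
    [FiniteDimensional (ZMod 2) V₁] [FiniteDimensional (ZMod 2) V₂]
    {ι₁ ι₂ : Type} [Fintype ι₁] [Fintype ι₂]
    (e₁ : ι₁ → V₁) (e₂ : ι₂ → V₂)
    (W₁ : Submodule (ZMod 2) V₁) (W₂ : Submodule (ZMod 2) V₂)
    (hW₁rank : Module.finrank (ZMod 2) W₁ = 2) (hW₂rank : Module.finrank (ZMod 2) W₂ = 2)
    (hW₁mem : ∀ w ∈ W₁, w ≠ 0 → ∃ i, e₁ i = w)
    (hW₂mem : ∀ w ∈ W₂, w ≠ 0 → ∃ j, e₂ j = w)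
    (φ : W₁ ≃ₗ[ZMod 2] W₂)
    (W : Submodule (ZMod 2) (V₁ × V₂))
    (hW : W = LinearMap.range
      (LinearMap.prod W₁.subtype (W₂.subtype.comp (φ : W₁ →ₗ[ZMod 2] W₂))))
    (e : {i : ι₁ // e₁ i ∉ W₁} ⊕ {j : ι₂ // e₂ j ∉ W₂} → (V₁ × V₂) ⧸ W)
    (he : e = Sum.elim
      (fun i => Submodule.Quotient.mk ((e₁ i.1, 0) : V₁ × V₂))
      (fun j => Submodule.Quotient.mk ((0, e₂ j.1) : V₁ × V₂)))
    (e₁' : {i : ι₁ // e₁ i ∉ W₁} → V₁ ⧸ W₁)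
    (he₁' : e₁' = fun i => Submodule.Quotient.mk (e₁ i.1))
    (e₂' : {j : ι₂ // e₂ j ∉ W₂} → V₂ ⧸ W₂)
    (he₂' : e₂' = fun j => Submodule.Quotient.mk (e₂ j.1))
    (hnt₁ : Nontrivial (V₁ ⧸ W₁)) (hnt₂ : Nontrivial (V₂ ⧸ W₂))
    (hspan₁ : Submodule.span (ZMod 2) (Set.range e₁') = ⊤)
    (hspan₂ : Submodule.span (ZMod 2) (Set.range e₂') = ⊤) :
    cogirth e * (cogirth e₁' + cogirth e₂') ≤ cogirth e₁' * cogirth e₂' := by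
  haveI := hnt₁; haveI := hnt₂
  set c₁ := cogirth e₁' with hc₁def
  set c₂ := cogirth e₂' with hc₂def
  have hc₁0 : 0 ≤ c₁ := cogirth_nonneg e₁'
  have hc₂0 : 0 ≤ c₂ := cogirth_nonneg e₂'
  -- the projection maps
  have hker₁ : W ≤ LinearMap.ker ((W₁.mkQ).comp (LinearMap.fst (ZMod 2) V₁ V₂)) := by
    rw [hW]
    rintro x ⟨w, rfl⟩
    simp only [LinearMap.mem_ker, LinearMap.comp_apply, LinearMap.prod_apply, LinearMap.fst_apply,
      Pi.prod, Submodule.subtype_apply, Submodule.mkQ_apply]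
    rw [Submodule.Quotient.mk_eq_zero]
    exact w.2
  have hker₂ : W ≤ LinearMap.ker ((W₂.mkQ).comp (LinearMap.snd (ZMod 2) V₁ V₂)) := by
    rw [hW]
    rintro x ⟨w, rfl⟩
    simp only [LinearMap.mem_ker, LinearMap.comp_apply, LinearMap.prod_apply, LinearMap.snd_apply,
      Pi.prod, Submodule.subtype_apply, Submodule.mkQ_apply, LinearMap.coe_comp]
    rw [Submodule.Quotient.mk_eq_zero]
    exact (φ w).2
  set T₁ : ((V₁ × V₂) ⧸ W) →ₗ[ZMod 2] (V₁ ⧸ W₁) :=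
    W.liftQ ((W₁.mkQ).comp (LinearMap.fst (ZMod 2) V₁ V₂)) hker₁ with hT₁def
  set T₂ : ((V₁ × V₂) ⧸ W) →ₗ[ZMod 2] (V₂ ⧸ W₂) :=
    W.liftQ ((W₂.mkQ).comp (LinearMap.snd (ZMod 2) V₁ V₂)) hker₂ with hT₂def
  have hT₁surj : Function.Surjective T₁ := by
    intro y
    obtain ⟨z, rfl⟩ := Submodule.mkQ_surjective W₁ y
    exact ⟨W.mkQ (z, 0), by simp [hT₁def]⟩
  have hT₂surj : Function.Surjective T₂ := by
    intro y
    obtain ⟨z, rfl⟩ := Submodule.mkQ_surjective W₂ y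
    exact ⟨W.mkQ (0, z), by simp [hT₂def]⟩
  have hT₁e : ∀ k : {i : ι₁ // e₁ i ∉ W₁}, T₁ (e (Sum.inl k)) = e₁' k := by
    intro k
    rw [he, he₁']
    simp [hT₁def, Submodule.liftQ_apply]
  have hT₁e0 : ∀ σ, σ ∉ Set.range (Sum.inl : {i : ι₁ // e₁ i ∉ W₁} →
      {i : ι₁ // e₁ i ∉ W₁} ⊕ {j : ι₂ // e₂ j ∉ W₂}) → T₁ (e σ) = 0 := by
    rintro (i | j) hσ
    · exact absurd ⟨i, rfl⟩ hσ
    · rw [he]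
      simp [hT₁def, Submodule.liftQ_apply]
  have hT₂e : ∀ k : {j : ι₂ // e₂ j ∉ W₂}, T₂ (e (Sum.inr k)) = e₂' k := by
    intro k
    rw [he, he₂']
    simp [hT₂def, Submodule.liftQ_apply]
  have hT₂e0 : ∀ σ, σ ∉ Set.range (Sum.inr : {j : ι₂ // e₂ j ∉ W₂} →
      {i : ι₁ // e₁ i ∉ W₁} ⊕ {j : ι₂ // e₂ j ∉ W₂}) → T₂ (e σ) = 0 := by
    rintro (i | j) hσ
    · rw [he]
      simp [hT₂def, Submodule.liftQ_apply]
    · exact absurd ⟨j, rfl⟩ hσ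
  -- the key pointwise bound
  have key : ∀ x ∈ {x : ℝ | ∃ lam, (∀ i, 0 ≤ lam i) ∧ (∑ i, lam i = 1) ∧ x = mWeight e lam},
      x * (c₁ + c₂) ≤ c₁ * c₂ := by
    rintro x ⟨lam, hlam, hsum, rfl⟩
    have b₁ : mWeight e lam ≤ (∑ k, lam (Sum.inl k)) * c₁ :=
      mWeight_le_mul_cogirth e e₁' T₁ hT₁surj Sum.inl Sum.inl_injective hT₁e hT₁e0 lam hlam
    have b₂ : mWeight e lam ≤ (∑ k, lam (Sum.inr k)) * c₂ :=
      mWeight_le_mul_cogirth e e₂' T₂ hT₂surj Sum.inr Sum.inr_injective hT₂e hT₂e0 lam hlam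
    have hsplit : (∑ k, lam (Sum.inl k)) + (∑ k, lam (Sum.inr k)) = 1 := by
      rw [← hsum, Fintype.sum_sum_type]
    calc mWeight e lam * (c₁ + c₂)
        = mWeight e lam * c₁ + mWeight e lam * c₂ := by ring
      _ ≤ ((∑ k, lam (Sum.inr k)) * c₂) * c₁ + ((∑ k, lam (Sum.inl k)) * c₁) * c₂ :=
          add_le_add (mul_le_mul_of_nonneg_right b₂ hc₁0) (mul_le_mul_of_nonneg_right b₁ hc₂0)
      _ = ((∑ k, lam (Sum.inl k)) + (∑ k, lam (Sum.inr k))) * (c₁ * c₂) := by ring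
      _ = c₁ * c₂ := by rw [hsplit, one_mul]
  rcases eq_or_lt_of_le (by linarith : (0:ℝ) ≤ c₁ + c₂) with hzero | hpos
  · have : cogirth e * (c₁ + c₂) = 0 := by rw [← hzero, mul_zero]
    rw [this]
    exact mul_nonneg hc₁0 hc₂0
  · have hble : cogirth e ≤ c₁ * c₂ / (c₁ + c₂) := by
      apply Real.sSup_le
      · intro x hx
        rw [le_div_iff₀ hpos]
        exact key x hx
      · exact div_nonneg (mul_nonneg hc₁0 hc₂0) hpos.le
    calc cogirth e * (c₁ + c₂) ≤ (c₁ * c₂ / (c₁ + c₂)) * (c₁ + c₂) :=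
          mul_le_mul_of_nonneg_right hble hpos.le
      _ = c₁ * c₂ := div_mul_cancel₀ _ hpos.ne'
end
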